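/- arXiv:1509.02121 — 2 statements merged into one kernel-verified Lean document; each statement's English description precedes it below -/
import Mathlib

section
/- Let n ≥ 2, let x0 ∈ ℝⁿ, and let Q : ℝⁿ → [0, ∞) be integrable on some ball B(x0, r0) and have finite mean oscillation at x0. Then for every ε0 ∈ (0, min(r0, 1/e)) one has, as ε → 0⁺, ∫_{ε < |x−x0| < ε0} Q(x) / (|x−x0| · log(1/|x−x0|))ⁿ dx = O(log log(1/ε)); that is, there exist C > 0 and ε1 ∈ (0, ε0) such that ∫_{ε < |x−x0| < ε0} Q(x) / (|x−x0| · log(1/|x−x0|))ⁿ dx ≤ C · log log(1/ε) for all ε ∈ (0, ε1). -/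
/-!
Let `M` bound the mean oscillation of `Q` on the balls `B(x0, r)`, `0 < r ≤ ε0`; for small `r`
this is the FMO hypothesis, for the others it follows from integrability. Passing from
`B(x0, 2r)` to `B(x0, r)` raises the average of `Q` by at most `2ⁿ M`, so the average over
`B(x0, ε0 / 2ᵏ)` grows at most linearly in `k`. On the dyadic shell
`ε0 / 2ᵏ⁺¹ ≤ |x - x0| < ε0 / 2ᵏ` the weight `(|x - x0| log (1 / |x - x0|))⁻ⁿ` is of order
`(2ᵏ / (ε0 (k + 1)))ⁿ` while the shell lies in a ball of volume of order `(ε0 / 2ᵏ)ⁿ`, so the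
shell contributes `O((k + 1)¹⁻ⁿ) = O(1 / (k + 1))` because `n ≥ 2`. About `log (1 / ε)` shells
cover `ε < |x - x0| < ε0`, and the harmonic sum of their contributions is `O(log log (1 / ε))`.
-/

open MeasureTheory Metric Filter Topology

section MeanOscillation

variable {α : Type*} [MeasurableSpace α] {μ : Measure α} {Q : α → ℝ} {s t : Set α}

noncomputable def meanOscillation (μ : Measure α) (Q : α → ℝ) (s : Set α) : ℝ :=
  ⨍ x in s, |Q x - ⨍ y in s, Q y ∂μ| ∂μ

theorem setAverage_nonneg (hQ0 : ∀ x, 0 ≤ Q x) : 0 ≤ ⨍ x in s, Q x ∂μ := by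
  rw [setAverage_eq]
  exact smul_nonneg (inv_nonneg.2 measureReal_nonneg) (integral_nonneg hQ0)

theorem meanOscillation_nonneg : 0 ≤ meanOscillation μ Q s :=
  setAverage_nonneg fun _ => abs_nonneg _

theorem setAverage_le_add_mul_meanOscillation (hst : s ⊆ t) (hs : μ s ≠ 0) (ht : μ t ≠ ⊤)
    (hQ : IntegrableOn Q t μ) :
    ⨍ x in s, Q x ∂μ ≤ ⨍ x in t, Q x ∂μ + μ.real t / μ.real s * meanOscillation μ Q t := by
  set c := ⨍ x in t, Q x ∂μ
  have hs_fin : μ s ≠ ⊤ := ((measure_mono hst).trans_lt ht.lt_top).ne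
  have hs_pos : 0 < μ.real s := ENNReal.toReal_pos hs hs_fin
  have hosc : μ.real s * (⨍ x in s, Q x ∂μ - c) ≤ μ.real t * meanOscillation μ Q t :=
    calc μ.real s * (⨍ x in s, Q x ∂μ - c) = ∫ x in s, (Q x - c) ∂μ := by
          rw [integral_sub (hQ.mono_set hst) (integrableOn_const hs_fin), setIntegral_const,
            ← measure_smul_setAverage _ hs_fin, smul_eq_mul, smul_eq_mul, mul_sub]
      _ ≤ ∫ x in s, |Q x - c| ∂μ :=
          integral_mono ((hQ.mono_set hst).sub (integrableOn_const hs_fin))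
            ((hQ.mono_set hst).sub (integrableOn_const hs_fin)).abs fun x => le_abs_self _
      _ ≤ ∫ x in t, |Q x - c| ∂μ :=
          setIntegral_mono_set (hQ.sub (integrableOn_const ht)).abs
            (Eventually.of_forall fun x => abs_nonneg _) hst.eventuallyLE
      _ = μ.real t * meanOscillation μ Q t := (measure_smul_setAverage _ ht).symm
  rw [div_mul_eq_mul_div, ← sub_le_iff_le_add', le_div_iff₀ hs_pos, mul_comm]
  exact hosc

theorem meanOscillation_le_two_mul_setAverage (hQ0 : ∀ x, 0 ≤ Q x) (hs : μ s ≠ 0)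
    (hs_fin : μ s ≠ ⊤) (hQ : IntegrableOn Q s μ) :
    meanOscillation μ Q s ≤ 2 * ⨍ x in s, Q x ∂μ := by
  set c := ⨍ x in s, Q x ∂μ
  have hc : 0 ≤ c := setAverage_nonneg hQ0
  have hs_pos : 0 < μ.real s := ENNReal.toReal_pos hs hs_fin
  have hint : ∫ x in s, |Q x - c| ∂μ ≤ ∫ x in s, (Q x + c) ∂μ :=
    integral_mono (hQ.sub (integrableOn_const hs_fin)).abs (hQ.add (integrableOn_const hs_fin))
      fun x => (abs_sub _ _).trans_eq (by rw [abs_of_nonneg (hQ0 x), abs_of_nonneg hc])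
  rw [integral_add hQ (integrableOn_const hs_fin), setIntegral_const,
    ← measure_smul_setAverage _ hs_fin, smul_eq_mul, smul_eq_mul,
    ← measure_smul_setAverage _ hs_fin, smul_eq_mul] at hint
  rw [meanOscillation]
  nlinarith

end MeanOscillation

section FiniteMeanOscillation

variable {X : Type*} [PseudoMetricSpace X] [ProperSpace X] [MeasurableSpace X] {μ : Measure X}
  [μ.IsOpenPosMeasure] [IsFiniteMeasureOnCompacts μ] {Q : X → ℝ} {x : X}

theorem exists_forall_meanOscillation_ball_le {r₀ : ℝ} (hQ0 : ∀ y, 0 ≤ Q y)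
    (hQ : IntegrableOn Q (ball x r₀) μ)
    (hFMO : ∃ M : ℝ, ∀ᶠ r in 𝓝[>] (0 : ℝ), meanOscillation μ Q (ball x r) ≤ M) :
    ∃ M, ∀ r ∈ Set.Ioc 0 r₀, meanOscillation μ Q (ball x r) ≤ M := by
  obtain ⟨M, hM⟩ := hFMO
  obtain ⟨δ, hδ, hδM⟩ := mem_nhdsGT_iff_exists_Ioo_subset.mp hM
  refine ⟨max M (2 * (∫ y in ball x r₀, Q y ∂μ) / μ.real (ball x δ)), fun r hr => ?_⟩
  rcases lt_or_ge r δ with hrδ | hδr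
  · exact le_max_of_le_left (hδM ⟨hr.1, hrδ⟩)
  refine le_max_of_le_right ?_
  have hδ_pos : 0 < μ.real (ball x δ) :=
    ENNReal.toReal_pos (measure_ball_pos μ x hδ).ne' measure_ball_lt_top.ne
  calc meanOscillation μ Q (ball x r)
      ≤ 2 * ⨍ y in ball x r, Q y ∂μ :=
        meanOscillation_le_two_mul_setAverage hQ0 (measure_ball_pos μ x hr.1).ne'
          measure_ball_lt_top.ne (hQ.mono_set (ball_subset_ball hr.2))
    _ = 2 * (∫ y in ball x r, Q y ∂μ) / μ.real (ball x r) := by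
        rw [setAverage_eq, smul_eq_mul]; ring
    _ ≤ 2 * (∫ y in ball x r₀, Q y ∂μ) / μ.real (ball x δ) := by
        gcongr 2 * ?_ / ?_
        · exact mul_nonneg zero_le_two (integral_nonneg hQ0)
        · exact setIntegral_mono_set hQ (Eventually.of_forall hQ0)
            (ball_subset_ball hr.2).eventuallyLE
        · exact measureReal_mono (ball_subset_ball hδr) measure_ball_lt_top.ne

end FiniteMeanOscillation

open Module

section HaarBalls

variable {E : Type*} [NormedAddCommGroup E] [NormedSpace ℝ E] [FiniteDimensional ℝ E]
  [MeasurableSpace E] [BorelSpace E] {μ : Measure E} [μ.IsAddHaarMeasure] {Q : E → ℝ} {x : E}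

theorem measureReal_ball_of_pos (μ : Measure E) [μ.IsAddHaarMeasure] (x : E) {r : ℝ}
    (hr : 0 < r) : μ.real (ball x r) = r ^ finrank ℝ E * μ.real (ball 0 1) := by
  rw [measureReal_def, Measure.addHaar_ball_of_pos μ x hr, ENNReal.toReal_mul,
    ENNReal.toReal_ofReal (by positivity), measureReal_def]

theorem setAverage_ball_le_add_meanOscillation_ball_two_mul {r : ℝ} (hr : 0 < r)
    (hQ : IntegrableOn Q (ball x (2 * r)) μ) :
    ⨍ y in ball x r, Q y ∂μ ≤
      ⨍ y in ball x (2 * r), Q y ∂μ + 2 ^ finrank ℝ E * meanOscillation μ Q (ball x (2 * r)) := by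
  have hratio : μ.real (ball x (2 * r)) / μ.real (ball x r) = 2 ^ finrank ℝ E := by
    have hunit : 0 < μ.real (ball (0 : E) 1) :=
      ENNReal.toReal_pos (measure_ball_pos μ 0 one_pos).ne' measure_ball_lt_top.ne
    rw [measureReal_ball_of_pos μ x (by positivity), measureReal_ball_of_pos μ x hr, mul_pow]
    field_simp
  rw [← hratio]
  exact setAverage_le_add_mul_meanOscillation (ball_subset_ball (by linarith))
    (measure_ball_pos μ x hr).ne' measure_ball_lt_top.ne hQ

theorem setAverage_ball_div_two_pow_le {a M : ℝ} (ha : 0 < a) (hQ : IntegrableOn Q (ball x a) μ)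
    (hosc : ∀ r ∈ Set.Ioc 0 a, meanOscillation μ Q (ball x r) ≤ M) (k : ℕ) :
    ⨍ y in ball x (a / 2 ^ k), Q y ∂μ ≤ ⨍ y in ball x a, Q y ∂μ + 2 ^ finrank ℝ E * M * k := by
  induction k with
  | zero => simp
  | succ k ih =>
    have hk : a / 2 ^ k ≤ a := div_le_self ha.le (one_le_pow₀ one_le_two)
    have htwice : 2 * (a / 2 ^ (k + 1)) = a / 2 ^ k := by ring
    have hhalf := setAverage_ball_le_add_meanOscillation_ball_two_mul (μ := μ)
      (r := a / 2 ^ (k + 1)) (by positivity)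
      (by rw [htwice]; exact hQ.mono_set (ball_subset_ball hk))
    rw [htwice] at hhalf
    have hM := hosc (a / 2 ^ k) ⟨by positivity, hk⟩
    push_cast
    nlinarith [pow_pos (two_pos (α := ℝ)) (finrank ℝ E)]

theorem setIntegral_ball_div_two_pow_le {a M : ℝ} (hQ0 : ∀ y, 0 ≤ Q y) (ha : 0 < a)
    (hQ : IntegrableOn Q (ball x a) μ)
    (hosc : ∀ r ∈ Set.Ioc 0 a, meanOscillation μ Q (ball x r) ≤ M) (k : ℕ) :
    ∫ y in ball x (a / 2 ^ k), Q y ∂μ ≤ (a / 2 ^ k) ^ finrank ℝ E * μ.real (ball 0 1) * (k + 1) *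
      (⨍ y in ball x a, Q y ∂μ + 2 ^ finrank ℝ E * M) := by
  have hM : 0 ≤ M := meanOscillation_nonneg.trans (hosc a ⟨ha, le_rfl⟩)
  rw [← measure_smul_setAverage _ measure_ball_lt_top.ne,
    measureReal_ball_of_pos μ x (by positivity), smul_eq_mul, mul_assoc ((a / 2 ^ k) ^ finrank ℝ E * μ.real (ball 0 1))]
  refine mul_le_mul_of_nonneg_left ((setAverage_ball_div_two_pow_le ha hQ hosc k).trans ?_)
    (mul_nonneg (by positivity) measureReal_nonneg)
  nlinarith [setAverage_nonneg (μ := μ) (s := ball x a) hQ0,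
    mul_nonneg (pow_nonneg zero_le_two (finrank ℝ E)) hM]

end HaarBalls

theorem one_le_log_one_div {d : ℝ} (hd : 0 < d) (hde : d ≤ 1 / Real.exp 1) :
    1 ≤ Real.log (1 / d) := by
  rw [one_div, Real.log_inv, le_neg, ← Real.log_exp (-1), Real.exp_neg, ← one_div]
  exact Real.log_le_log hd hde

theorem half_succ_le_log_one_div {a d : ℝ} (k : ℕ) (ha : 0 < a) (hae : a ≤ 1 / Real.exp 1)
    (hd : 0 < d) (hda : d < a / 2 ^ k) : ((k : ℝ) + 1) / 2 ≤ Real.log (1 / d) := by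
  have hlog_a : 1 ≤ Real.log (1 / a) := one_le_log_one_div ha hae
  have hmono : Real.log (2 ^ k * (1 / a)) ≤ Real.log (1 / d) := by
    refine Real.log_le_log (by positivity) ?_
    rw [lt_div_iff₀ (by positivity)] at hda
    rw [le_div_iff₀ hd]
    field_simp
    linarith
  rw [Real.log_mul (by positivity) (by positivity), Real.log_pow] at hmono
  nlinarith [Real.log_two_gt_d9, (Nat.cast_nonneg k : (0 : ℝ) ≤ k)]

section LogWeighted

variable {X : Type*} [PseudoMetricSpace X] {Q : X → ℝ} {x₀ x : X} {p : ℕ}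

noncomputable def logWeighted (x₀ : X) (Q : X → ℝ) (p : ℕ) (x : X) : ℝ :=
  Q x / (dist x x₀ * Real.log (1 / dist x x₀)) ^ p

theorem logWeighted_nonneg (hQ0 : 0 ≤ Q x) (hx : dist x x₀ ≤ 1) : 0 ≤ logWeighted x₀ Q p x := by
  have hlog : 0 ≤ Real.log (1 / dist x x₀) := by
    rw [one_div, Real.log_inv, neg_nonneg]
    exact Real.log_nonpos dist_nonneg hx
  exact div_nonneg hQ0 (pow_nonneg (mul_nonneg dist_nonneg hlog) p)

theorem logWeighted_le {lo li : ℝ} (hQ0 : 0 ≤ Q x) (hlo : 0 < lo) (hli : 0 < li)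
    (hd : lo ≤ dist x x₀) (hl : li ≤ Real.log (1 / dist x x₀)) :
    logWeighted x₀ Q p x ≤ Q x / (lo * li) ^ p :=
  div_le_div_of_nonneg_left hQ0 (by positivity) (pow_le_pow_left₀ (by positivity)
    (mul_le_mul hd hl hli.le (hlo.le.trans hd)) p)

variable [MeasurableSpace X] [OpensMeasurableSpace X] {μ : Measure X}

theorem integrableOn_logWeighted {c R : ℝ} (hc : 0 < c) (hRe : R ≤ 1 / Real.exp 1)
    (hQ0 : ∀ y, 0 ≤ Q y) (hQ : IntegrableOn Q (ball x₀ R) μ) :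
    IntegrableOn (logWeighted x₀ Q p) {x | dist x x₀ ∈ Set.Ico c R} μ := by
  have hdist : Measurable fun x => dist x x₀ := (continuous_id.dist continuous_const).measurable
  have hsub : {x | dist x x₀ ∈ Set.Ico c R} ⊆ ball x₀ R := fun x hx => mem_ball.2 hx.2
  have hQs := hQ.mono_set hsub
  have hmeas : AEStronglyMeasurable (logWeighted x₀ Q p)
      (μ.restrict {x | dist x x₀ ∈ Set.Ico c R}) :=
    (hQs.aemeasurable.div ((hdist.mul (Real.measurable_log.comp
      (measurable_const.div hdist))).pow_const p).aemeasurable).aestronglyMeasurable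
  refine (Integrable.div_const hQs ((c * 1) ^ p)).mono' hmeas
    (ae_restrict_of_forall_mem (hdist measurableSet_Ico) fun x hx => ?_)
  have hd : 0 < dist x x₀ := hc.trans_le hx.1
  have hde : dist x x₀ ≤ 1 / Real.exp 1 := hx.2.le.trans hRe
  rw [Real.norm_of_nonneg (logWeighted_nonneg (hQ0 x) (hde.trans
    ((div_le_one (Real.exp_pos 1)).2 (Real.one_le_exp zero_le_one))))]
  exact logWeighted_le (hQ0 x) hc one_pos hx.1 (one_le_log_one_div hd hde)

end LogWeighted

theorem setIntegral_preimage_Ico_eq_sum {X F : Type*} [MeasurableSpace X] [NormedAddCommGroup F]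
    [NormedSpace ℝ F] {μ : Measure X} {g : X → ℝ} (hg : Measurable g) {r : ℕ → ℝ}
    (hr : Antitone r) {f : X → F} (K : ℕ) (hf : IntegrableOn f (g ⁻¹' Set.Ico (r K) (r 0)) μ) :
    ∫ x in g ⁻¹' Set.Ico (r K) (r 0), f x ∂μ =
      ∑ k ∈ Finset.range K, ∫ x in g ⁻¹' Set.Ico (r (k + 1)) (r k), f x ∂μ := by
  induction K with
  | zero => simp
  | succ K ih =>
    have hsplit : g ⁻¹' Set.Ico (r (K + 1)) (r 0) =
        g ⁻¹' Set.Ico (r (K + 1)) (r K) ∪ g ⁻¹' Set.Ico (r K) (r 0) := by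
      rw [← Set.preimage_union, Set.Ico_union_Ico_eq_Ico (hr K.le_succ) (hr K.zero_le)]
    rw [hsplit] at hf ⊢
    rw [setIntegral_union (Set.Ico_disjoint_Ico_same.preimage g) (hg measurableSet_Ico)
      (hf.mono_set Set.subset_union_left) (hf.mono_set Set.subset_union_right),
      ih (hf.mono_set Set.subset_union_right), Finset.sum_range_succ, add_comm]

section DyadicDecomposition

variable {E : Type*} [NormedAddCommGroup E] [NormedSpace ℝ E] [FiniteDimensional ℝ E]
  [MeasurableSpace E] [BorelSpace E] {μ : Measure E} [μ.IsAddHaarMeasure] {Q : E → ℝ} {x₀ : E}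
  {a M : ℝ}

theorem setIntegral_logWeighted_dyadic_le (hdim : 2 ≤ finrank ℝ E) (hQ0 : ∀ y, 0 ≤ Q y)
    (ha : 0 < a) (hae : a ≤ 1 / Real.exp 1) (hQ : IntegrableOn Q (ball x₀ a) μ)
    (hosc : ∀ r ∈ Set.Ioc 0 a, meanOscillation μ Q (ball x₀ r) ≤ M) (k : ℕ) :
    ∫ x in {x | dist x x₀ ∈ Set.Ico (a / 2 ^ (k + 1)) (a / 2 ^ k)},
        logWeighted x₀ Q (finrank ℝ E) x ∂μ ≤
      4 ^ finrank ℝ E * μ.real (ball 0 1) * (⨍ y in ball x₀ a, Q y ∂μ + 2 ^ finrank ℝ E * M) /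
        (k + 1) := by
  set d := finrank ℝ E
  set r := a / 2 ^ k
  set S := {x | dist x x₀ ∈ Set.Ico (a / 2 ^ (k + 1)) r}
  set B := ⨍ y in ball x₀ a, Q y ∂μ + 2 ^ d * M
  set ω := μ.real (ball (0 : E) 1)
  have hr : 0 < r := by positivity
  have hra : r ≤ a := div_le_self ha.le (one_le_pow₀ one_le_two)
  have hS : MeasurableSet S :=
    (continuous_id.dist continuous_const).measurable measurableSet_Ico
  have hSball : S ⊆ ball x₀ r := fun x hx => mem_ball.2 hx.2
  have hQr : IntegrableOn Q (ball x₀ r) μ := hQ.mono_set (ball_subset_ball hra)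
  have hB : 0 ≤ B := add_nonneg (setAverage_nonneg hQ0)
    (mul_nonneg (by positivity) (meanOscillation_nonneg.trans (hosc a ⟨ha, le_rfl⟩)))
  have hω : 0 ≤ ω := measureReal_nonneg
  have hpoint : ∀ x ∈ S, logWeighted x₀ Q d x ≤ Q x / (r / 2 * ((k + 1) / 2)) ^ d := by
    intro x hx
    have hd : 0 < dist x x₀ := lt_of_lt_of_le (by positivity) hx.1
    refine logWeighted_le (hQ0 x) (by positivity) (by positivity)
      (by rw [div_div, ← pow_succ]; exact hx.1) (half_succ_le_log_one_div k ha hae hd hx.2)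
  have hball : ∫ x in ball x₀ r, Q x ∂μ ≤ r ^ d * ω * (k + 1) * B :=
    setIntegral_ball_div_two_pow_le hQ0 ha hQ hosc k
  calc ∫ x in S, logWeighted x₀ Q d x ∂μ
      ≤ ∫ x in S, Q x / (r / 2 * ((k + 1) / 2)) ^ d ∂μ :=
        integral_mono_of_nonneg
          (ae_restrict_of_forall_mem hS fun x hx => logWeighted_nonneg (hQ0 x)
            (hx.2.le.trans (hra.trans (hae.trans
              ((div_le_one (Real.exp_pos 1)).2 (Real.one_le_exp zero_le_one))))))
          ((hQr.mono_set hSball).div_const _) (ae_restrict_of_forall_mem hS hpoint)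
    _ = (∫ x in S, Q x ∂μ) / (r / 2 * ((k + 1) / 2)) ^ d := integral_div _ _
    _ ≤ (r ^ d * ω * (k + 1) * B) / (r / 2 * ((k + 1) / 2)) ^ d := by
        gcongr
        exact (setIntegral_mono_set hQr (Eventually.of_forall hQ0) hSball.eventuallyLE).trans hball
    _ = 4 ^ d * ω * B / (k + 1) ^ (d - 1) := by
        rw [show (r / 2 * ((k + 1) / 2)) ^ d = r ^ d * (k + 1) ^ (d - 1) * (k + 1) / 4 ^ d by
          rw [mul_assoc (r ^ d), ← pow_succ, Nat.sub_add_cancel (by omega), ← mul_pow, ← div_pow]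
          ring]
        field_simp
    _ ≤ 4 ^ d * ω * B / (k + 1) := by
        gcongr
        exact le_self_pow₀ (by linarith) (by omega)

theorem exists_setIntegral_logWeighted_le_mul_one_add_log (hdim : 2 ≤ finrank ℝ E)
    (hQ0 : ∀ y, 0 ≤ Q y) (ha : 0 < a) (hae : a ≤ 1 / Real.exp 1)
    (hQ : IntegrableOn Q (ball x₀ a) μ)
    (hosc : ∀ r ∈ Set.Ioc 0 a, meanOscillation μ Q (ball x₀ r) ≤ M) :
    ∃ C ≥ 0, ∀ (ε : ℝ) (K : ℕ), a / 2 ^ K ≤ ε →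
      ∫ x in {x | dist x x₀ ∈ Set.Ioo ε a}, logWeighted x₀ Q (finrank ℝ E) x ∂μ ≤
        C * (1 + Real.log K) := by
  set C := 4 ^ finrank ℝ E * μ.real (ball (0 : E) 1) *
    (⨍ y in ball x₀ a, Q y ∂μ + 2 ^ finrank ℝ E * M)
  have hC : 0 ≤ C := mul_nonneg (by positivity) (add_nonneg (setAverage_nonneg hQ0)
    (mul_nonneg (by positivity) (meanOscillation_nonneg.trans (hosc a ⟨ha, le_rfl⟩))))
  refine ⟨C, hC, fun ε K hK => ?_⟩
  set r : ℕ → ℝ := fun k => a / 2 ^ k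
  have hr : Antitone r := fun i j hij =>
    div_le_div_of_nonneg_left ha.le (by positivity) (pow_le_pow_right₀ one_le_two hij)
  have hdist : Measurable fun x => dist x x₀ := (continuous_id.dist continuous_const).measurable
  have hr0 : r 0 = a := by simp [r]
  have hint : IntegrableOn (logWeighted x₀ Q (finrank ℝ E))
      ((fun x => dist x x₀) ⁻¹' Set.Ico (r K) (r 0)) μ := by
    rw [hr0]
    exact integrableOn_logWeighted (by positivity) hae hQ0 hQ
  have hnonneg : ∀ x ∈ (fun x => dist x x₀) ⁻¹' Set.Ico (r K) (r 0),
      0 ≤ logWeighted x₀ Q (finrank ℝ E) x := fun x hx =>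
    logWeighted_nonneg (hQ0 x) ((hx.2.le.trans_eq hr0).trans
      (hae.trans ((div_le_one (Real.exp_pos 1)).2 (Real.one_le_exp zero_le_one))))
  calc ∫ x in {x | dist x x₀ ∈ Set.Ioo ε a}, logWeighted x₀ Q (finrank ℝ E) x ∂μ
      ≤ ∫ x in (fun x => dist x x₀) ⁻¹' Set.Ico (r K) (r 0), logWeighted x₀ Q (finrank ℝ E) x ∂μ :=
        setIntegral_mono_set hint (ae_restrict_of_forall_mem (hdist measurableSet_Ico) hnonneg)
          (Eventually.of_forall fun x hx => ⟨hK.trans hx.1.le, hx.2.trans_eq hr0.symm⟩)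
    _ = ∑ k ∈ Finset.range K, (∫ x in (fun x => dist x x₀) ⁻¹' Set.Ico (r (k + 1)) (r k),
          logWeighted x₀ Q (finrank ℝ E) x ∂μ) :=
        setIntegral_preimage_Ico_eq_sum hdist hr K hint
    _ ≤ ∑ k ∈ Finset.range K, C / (k + 1) := Finset.sum_le_sum fun k _ =>
        setIntegral_logWeighted_dyadic_le hdim hQ0 ha hae hQ hosc k
    _ = C * harmonic K := by
        simp only [harmonic, div_eq_mul_inv]
        push_cast
        rw [Finset.mul_sum]
    _ ≤ C * (1 + Real.log K) := by
        gcongr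
        exact harmonic_le_one_add_log K

end DyadicDecomposition

theorem exists_inv_two_pow_le_and_log_le {ε : ℝ} (hε : 0 < ε)
    (hεe : ε ≤ Real.exp (-Real.exp 1)) :
    ∃ K : ℕ, 1 / 2 ^ K ≤ ε ∧ 1 + Real.log K ≤ 4 * Real.log (Real.log (1 / ε)) := by
  have hL : Real.exp 1 ≤ Real.log (1 / ε) := by
    rw [one_div, Real.log_inv, le_neg, ← Real.log_exp (-Real.exp 1)]
    exact Real.log_le_log hε hεe
  set L := Real.log (1 / ε)
  have hL1 : 1 ≤ L := le_trans (by simp) hL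
  have hLL : 1 ≤ Real.log L := by
    rw [← Real.log_exp 1]
    exact Real.log_le_log (Real.exp_pos 1) hL
  set K := ⌈2 * L⌉₊
  have hK_ge : 2 * L ≤ K := Nat.le_ceil _
  have hK_lt : (K : ℝ) < 2 * L + 1 := Nat.ceil_lt_add_one (by positivity)
  refine ⟨K, ?_, ?_⟩
  · have hpow : 1 / ε ≤ 2 ^ K := by
      rw [← Real.log_le_log_iff (by positivity) (by positivity), Real.log_pow]
      nlinarith [Real.log_two_gt_d9]
    exact (one_div_le (by positivity) hε).2 hpow
  · have hlog3 : Real.log 3 ≤ 2 := by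
      linarith [Real.log_le_sub_one_of_pos (by norm_num : (0 : ℝ) < 3)]
    have hlogK : Real.log K ≤ Real.log 3 + Real.log L := by
      rw [← Real.log_mul (by norm_num) (by positivity)]
      exact Real.log_le_log (by positivity) (by linarith)
    linarith

theorem fmo_loglog_estimate_general (n : ℕ) (hn : 2 ≤ n) (x0 : EuclideanSpace ℝ (Fin n))
    (Q : EuclideanSpace ℝ (Fin n) → ℝ) (hQ0 : ∀ x, 0 ≤ Q x)
    (r0 : ℝ) (hQint : IntegrableOn Q (ball x0 r0))
    (hFMO : ∃ M : ℝ, ∀ᶠ ε in 𝓝[>] (0 : ℝ),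
      ⨍ x in ball x0 ε, |Q x - ⨍ y in ball x0 ε, Q y| ≤ M)
    (ε0 : ℝ) (hε0 : ε0 ∈ Set.Ioo 0 (min r0 (1 / Real.exp 1))) :
    ∃ C > 0, ∃ ε1 ∈ Set.Ioo 0 ε0, ∀ ε ∈ Set.Ioo 0 ε1,
      ∫ x in {x | dist x x0 ∈ Set.Ioo ε ε0},
          Q x / (dist x x0 * Real.log (1 / dist x x0)) ^ n
        ≤ C * Real.log (Real.log (1 / ε)) := by
  obtain ⟨hε0_pos, hε0_lt⟩ := hε0
  have hε0_e : ε0 ≤ 1 / Real.exp 1 := hε0_lt.le.trans (min_le_right _ _)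
  have hQ : IntegrableOn Q (ball x0 ε0) :=
    hQint.mono_set (ball_subset_ball (hε0_lt.le.trans (min_le_left _ _)))
  obtain ⟨M, hosc⟩ := exists_forall_meanOscillation_ball_le hQ0 hQ hFMO
  have hdim : finrank ℝ (EuclideanSpace ℝ (Fin n)) = n := finrank_euclideanSpace_fin
  obtain ⟨C, hC, hbound⟩ := exists_setIntegral_logWeighted_le_mul_one_add_log (μ := volume)
    (hn.trans hdim.ge) hQ0 hε0_pos hε0_e hQ hosc
  rw [hdim] at hbound
  refine ⟨4 * C + 1, by positivity, min (ε0 / 2) (Real.exp (-Real.exp 1)),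
    ⟨by positivity, (min_le_left _ _).trans_lt (by linarith)⟩, fun ε hε => ?_⟩
  obtain ⟨K, hK, hlog⟩ := exists_inv_two_pow_le_and_log_le hε.1 (hε.2.le.trans (min_le_right _ _))
  have hε0_K : ε0 / 2 ^ K ≤ ε := (div_le_div_of_nonneg_right (hε0_e.trans
    ((div_le_one (Real.exp_pos 1)).2 (Real.one_le_exp zero_le_one))) (by positivity)).trans hK
  have hlogK : 0 ≤ Real.log K := Real.log_natCast_nonneg K
  calc _ ≤ C * (1 + Real.log K) := hbound ε K hε0_K
    _ ≤ C * (4 * Real.log (Real.log (1 / ε))) := by gcongr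
    _ ≤ (4 * C + 1) * Real.log (Real.log (1 / ε)) := by nlinarith

/-- If `Q ≥ 0` is integrable on a ball `B(x0, r0)` in `ℝⁿ`, `n ≥ 2`, and has
finite mean oscillation at `x0` (i.e. the means of `|Q - Q̄_ε|` over `B(x0, ε)` are eventually
bounded as `ε → 0⁺`), then for every `ε0 ∈ (0, min(r0, 1/e))` the integral of
`Q(x)/(|x - x0|·log(1/|x - x0|))ⁿ` over the annulus `ε < |x - x0| < ε0` is
`O(log log (1/ε))` as `ε → 0⁺`. -/
theorem fmo_loglog_estimate (n : ℕ) (hn : 2 ≤ n) (x0 : EuclideanSpace ℝ (Fin n))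
    (Q : EuclideanSpace ℝ (Fin n) → ℝ) (hQ0 : ∀ x, 0 ≤ Q x)
    (r0 : ℝ) (hr0 : 0 < r0) (hQint : IntegrableOn Q (ball x0 r0))
    (hFMO : ∃ M : ℝ, ∀ᶠ ε in 𝓝[>] (0 : ℝ),
      ⨍ x in ball x0 ε, |Q x - ⨍ y in ball x0 ε, Q y| ≤ M)
    (ε0 : ℝ) (hε0 : ε0 ∈ Set.Ioo 0 (min r0 (1 / Real.exp 1))) :
    ∃ C > 0, ∃ ε1 ∈ Set.Ioo 0 ε0, ∀ ε ∈ Set.Ioo 0 ε1,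
      ∫ x in {x | dist x x0 ∈ Set.Ioo ε ε0},
          Q x / (dist x x0 * Real.log (1 / dist x x0)) ^ n
        ≤ C * Real.log (Real.log (1 / ε)) :=
  fmo_loglog_estimate_general n hn x0 Q hQ0 r0 hQint hFMO ε0 hε0
end

section
/- Let n ≥ 2, let p ∈ [n−1, n) be a real number, let x0 ∈ ℝⁿ, let ε0 > 0, let s ≥ n/(n−p), and let Q : ℝⁿ → [0, ∞) be a nonnegative measurable function with Q ∈ L^s(B(x0, ε0)). Then lim_{ε → 0⁺} (log(ε0/ε))^{−p} · ∫_{ε < |x−x0| < ε0} Q(x) · |x−x0|^{−p} dx = 0; that is, ∫_{ε < |x−x0| < ε0} Q(x)·|x−x0|^{−p} dx = o( (∫_ε^{ε0} dt/t)^p ) as ε → 0⁺. -/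
/-!
Hölder's inequality with `s` and its conjugate exponent `q` bounds the annulus integral by
`‖Q‖_{L^s(B(x0, ε0))} · (∫_{ε < |x - x0| < ε0} |x - x0|^{-pq} dx)^{1/q}`. The hypothesis
`s ≥ n/(n - p)` says exactly that `pq ≤ n`, so `|x - x0|^{-pq} ≤ ε0^{n - pq} |x - x0|^{-n}`, and in
polar coordinates `∫_{ε < |x - x0| < ε0} |x - x0|^{-n} dx = n |B(0, 1)| log(ε0/ε)`. Hence the
integral is `O(log(ε0/ε)^{1/q})`, and `1/q < 1 ≤ p`.
-/

open MeasureTheory Metric Filter Topology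
open scoped ENNReal

section
variable {X : Type*} [PseudoMetricSpace X]

def annulus (x0 : X) (r R : ℝ) : Set X := {x | dist x x0 ∈ Set.Ioo r R}

theorem annulus_subset_ball (x0 : X) (r R : ℝ) : annulus x0 r R ⊆ ball x0 R :=
  fun _ hx => hx.2

variable [MeasurableSpace X] [OpensMeasurableSpace X]

theorem measurableSet_annulus (x0 : X) (r R : ℝ) : MeasurableSet (annulus x0 r R) :=
  measurableSet_Ioo.preimage (continuous_id.dist continuous_const).measurable

theorem memLp_annulus_dist_rpow (μ : Measure X) [IsFiniteMeasureOnCompacts μ] [ProperSpace X]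
    (x0 : X) {r : ℝ} (hr : 0 < r) (R : ℝ) {a : ℝ} (ha : a ≤ 0) (p : ℝ≥0∞) :
    MemLp (fun x => dist x x0 ^ a) p (μ.restrict (annulus x0 r R)) := by
  have hfin : IsFiniteMeasure (μ.restrict (annulus x0 r R)) :=
    isFiniteMeasure_restrict.2 ((measure_mono (annulus_subset_ball x0 r R)).trans_lt
      measure_ball_lt_top).ne
  refine MemLp.of_bound
    ((continuous_id.dist continuous_const).measurable.pow_const a).aestronglyMeasurable (r ^ a)
    ((ae_restrict_mem (measurableSet_annulus x0 r R)).mono fun x hx => ?_)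
  rw [Real.norm_of_nonneg (Real.rpow_nonneg dist_nonneg a)]
  exact Real.rpow_le_rpow_of_nonpos hr hx.1.le ha

end

theorem integral_Ioo_pow_sub_one_mul_rpow_neg {d : ℕ} (hd : 1 ≤ d) {r R : ℝ} (hr : 0 < r)
    (hrR : r ≤ R) :
    ∫ y in Set.Ioo r R, y ^ (d - 1) * y ^ (-(d : ℝ)) = Real.log (R / r) := by
  have heq : Set.EqOn (fun y : ℝ => y ^ (d - 1) * y ^ (-(d : ℝ))) (·⁻¹) (Set.Ioo r R) := by
    intro y hy
    dsimp only
    rw [← Real.rpow_natCast, ← Real.rpow_add (hr.trans hy.1), Nat.cast_sub hd, Nat.cast_one,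
      show (d : ℝ) - 1 + -d = -1 by ring, Real.rpow_neg_one]
  rw [setIntegral_congr_fun measurableSet_Ioo heq, ← integral_Ioc_eq_integral_Ioo,
    ← intervalIntegral.integral_of_le hrR, integral_inv]
  rw [Set.uIcc_of_le hrR]
  exact fun h => (not_le.2 hr) h.1

section
open Module

variable {E : Type*} [NormedAddCommGroup E] [NormedSpace ℝ E] [FiniteDimensional ℝ E]
  [MeasurableSpace E] [BorelSpace E] (μ : Measure E) [μ.IsAddHaarMeasure] [Nontrivial E]

theorem setIntegral_annulus_fun_dist (x0 : E) {r : ℝ} (hr : 0 ≤ r) (R : ℝ) (g : ℝ → ℝ) :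
    ∫ x in annulus x0 r R, g (dist x x0) ∂μ =
      finrank ℝ E * μ.real (ball 0 1) * ∫ y in Set.Ioo r R, y ^ (finrank ℝ E - 1) * g y := by
  have hIoo : Set.Ioo r R ⊆ Set.Ioi 0 := fun y hy => hr.trans_lt hy.1
  calc ∫ x in annulus x0 r R, g (dist x x0) ∂μ
      = ∫ x, (Set.Ioo r R).indicator g ‖x - x0‖ ∂μ := by
        rw [← integral_indicator (measurableSet_annulus x0 r R)]
        congr 1 with x
        rw [← dist_eq_norm]
        exact Set.indicator_comp_right (fun x => dist x x0)
    _ = ∫ x, (Set.Ioo r R).indicator g ‖x‖ ∂μ :=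
        integral_sub_right_eq_self (fun x => (Set.Ioo r R).indicator g ‖x‖) x0
    _ = _ := by
        rw [integral_fun_norm_addHaar μ, nsmul_eq_mul, smul_eq_mul, mul_assoc]
        congr 2
        rw [← integral_indicator measurableSet_Ioi, ← integral_indicator measurableSet_Ioo]
        congr 1 with y
        by_cases hy : y ∈ Set.Ioo r R
        · simp [hy, hIoo hy]
        · simp [hy]

theorem setIntegral_annulus_dist_rpow_neg_le (x0 : E) {r R : ℝ} (hr : 0 < r) (hrR : r ≤ R)
    {a : ℝ} (ha₀ : 0 ≤ a) (ha : a ≤ finrank ℝ E) :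
    ∫ x in annulus x0 r R, dist x x0 ^ (-a) ∂μ ≤
      R ^ ((finrank ℝ E : ℝ) - a) * (finrank ℝ E * μ.real (ball 0 1) * Real.log (R / r)) := by
  set d := finrank ℝ E
  have hA := measurableSet_annulus x0 r R
  calc ∫ x in annulus x0 r R, dist x x0 ^ (-a) ∂μ
      ≤ ∫ x in annulus x0 r R, R ^ ((d : ℝ) - a) * dist x x0 ^ (-(d : ℝ)) ∂μ := by
        have hint {b : ℝ} (hb : 0 ≤ b) :
            IntegrableOn (fun x => dist x x0 ^ (-b)) (annulus x0 r R) μ :=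
          memLp_one_iff_integrable.1 (memLp_annulus_dist_rpow μ x0 hr R (neg_nonpos.2 hb) 1)
        refine setIntegral_mono_on (hint ha₀) ((hint d.cast_nonneg).const_mul _) hA fun x hx => ?_
        have hx0 : 0 < dist x x0 := hr.trans hx.1
        calc dist x x0 ^ (-a) = dist x x0 ^ ((d : ℝ) - a) * dist x x0 ^ (-(d : ℝ)) := by
              rw [← Real.rpow_add hx0]; ring_nf
          _ ≤ R ^ ((d : ℝ) - a) * dist x x0 ^ (-(d : ℝ)) := by
              gcongr
              exact hx.2.le
    _ = R ^ ((d : ℝ) - a) * (d * μ.real (ball 0 1) * Real.log (R / r)) := by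
        rw [integral_const_mul, setIntegral_annulus_fun_dist μ x0 hr.le R (fun y => y ^ (-(d : ℝ))),
          integral_Ioo_pow_sub_one_mul_rpow_neg finrank_pos hr hrR]

theorem setIntegral_annulus_mul_dist_rpow_neg_le {x0 : E} {r R p s q : ℝ}
    (hsq : s.HolderConjugate q) (hp : 0 ≤ p) (hpq : p * q ≤ finrank ℝ E)
    (hr : 0 < r) (hrR : r ≤ R) {Q : E → ℝ} (hQ₀ : ∀ x, 0 ≤ Q x)
    (hQ : MemLp Q (ENNReal.ofReal s) (μ.restrict (ball x0 R))) :
    ∫ x in annulus x0 r R, Q x * dist x x0 ^ (-p) ∂μ ≤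
      (∫ x in ball x0 R, Q x ^ s ∂μ) ^ (1 / s) *
        (R ^ ((finrank ℝ E : ℝ) - p * q) * (finrank ℝ E * μ.real (ball 0 1))) ^ (1 / q) *
          Real.log (R / r) ^ (1 / q) := by
  have hA := measurableSet_annulus x0 r R
  have hAB : annulus x0 r R ⊆ ball x0 R := annulus_subset_ball x0 r R
  have hQs : Integrable (fun x => Q x ^ s) (μ.restrict (ball x0 R)) := by
    simpa [Real.norm_of_nonneg (hQ₀ _), ENNReal.toReal_ofReal hsq.nonneg] using
      hQ.integrable_norm_rpow (by simpa using hsq.pos) ENNReal.ofReal_ne_top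
  have hdist_pow (x : E) : (dist x x0 ^ (-p)) ^ q = dist x x0 ^ (-(p * q)) := by
    rw [← Real.rpow_mul dist_nonneg, neg_mul]
  have hlog : 0 ≤ Real.log (R / r) := Real.log_nonneg ((one_le_div hr).2 hrR)
  have hR : 0 ≤ R := hr.le.trans hrR
  rw [mul_assoc, ← Real.mul_rpow (by positivity) hlog, mul_assoc]
  calc ∫ x in annulus x0 r R, Q x * dist x x0 ^ (-p) ∂μ
      ≤ (∫ x in annulus x0 r R, Q x ^ s ∂μ) ^ (1 / s) *
          (∫ x in annulus x0 r R, (dist x x0 ^ (-p)) ^ q ∂μ) ^ (1 / q) :=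
        integral_mul_le_Lp_mul_Lq_of_nonneg hsq (Eventually.of_forall hQ₀)
          (Eventually.of_forall fun x => Real.rpow_nonneg dist_nonneg _)
          (hQ.mono_measure (Measure.restrict_mono hAB le_rfl))
          (memLp_annulus_dist_rpow μ x0 hr R (neg_nonpos.2 hp) _)
    _ ≤ _ := by
        simp_rw [hdist_pow]
        have hQs₀ : ∀ x, 0 ≤ Q x ^ s := fun x => Real.rpow_nonneg (hQ₀ x) s
        have hdist₀ : ∀ x, 0 ≤ dist x x0 ^ (-(p * q)) := fun x => Real.rpow_nonneg dist_nonneg _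
        refine mul_le_mul ?_ ?_ (Real.rpow_nonneg (setIntegral_nonneg hA fun x _ => hdist₀ x) _)
          (Real.rpow_nonneg (setIntegral_nonneg measurableSet_ball fun x _ => hQs₀ x) _)
        · refine Real.rpow_le_rpow (setIntegral_nonneg hA fun x _ => hQs₀ x) ?_
            (by simpa using hsq.nonneg)
          exact setIntegral_mono_set hQs (Eventually.of_forall hQs₀) (Eventually.of_forall hAB)
        · refine Real.rpow_le_rpow (setIntegral_nonneg hA fun x _ => hdist₀ x) ?_
            (by simpa using hsq.symm.nonneg)
          exact setIntegral_annulus_dist_rpow_neg_le μ x0 hr hrR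
            (mul_nonneg hp hsq.symm.nonneg) hpq

end

theorem tendsto_log_div_nhdsGT_zero_atTop {R : ℝ} (hR : 0 < R) :
    Tendsto (fun ε => Real.log (R / ε)) (𝓝[>] 0) atTop :=
  Real.tendsto_log_atTop.comp <|
    (tendsto_inv_nhdsGT_zero.const_mul_atTop hR).congr fun ε => (div_eq_mul_inv R ε).symm

theorem tendsto_rpow_neg_mul_of_le_rpow {α : Type*} {l : Filter α} {L f : α → ℝ}
    (hL : Tendsto L l atTop) {C a p : ℝ} (hap : a < p) (hf : ∀ᶠ x in l, f x ≤ C * L x ^ a)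
    (hf₀ : ∀ᶠ x in l, 0 ≤ f x) :
    Tendsto (fun x => L x ^ (-p) * f x) l (𝓝 0) := by
  have hdecay : Tendsto (fun x => C * L x ^ (a - p)) l (𝓝 0) := by
    simpa using ((tendsto_rpow_neg_atTop (by linarith : 0 < p - a)).comp hL).const_mul C
  refine squeeze_zero' ?_ ?_ hdecay
  · filter_upwards [hf₀, hL.eventually_gt_atTop 0] with x hfx hLx
    exact mul_nonneg (Real.rpow_nonneg hLx.le _) hfx
  · filter_upwards [hf, hL.eventually_gt_atTop 0] with x hfx hLx
    calc L x ^ (-p) * f x ≤ L x ^ (-p) * (C * L x ^ a) := by gcongr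
      _ = C * L x ^ (a - p) := by rw [sub_eq_add_neg, Real.rpow_add hLx]; ring

theorem tendsto_annulus_integral_div_log_pow_general (n : ℕ) (hn : 2 ≤ n) (p : ℝ)
    (hp₁ : (n : ℝ) - 1 ≤ p) (hp₂ : p < (n : ℝ))
    (x0 : EuclideanSpace ℝ (Fin n)) (ε0 : ℝ) (hε0 : 0 < ε0)
    (s : ℝ) (hs : (n : ℝ) / ((n : ℝ) - p) ≤ s)
    (Q : EuclideanSpace ℝ (Fin n) → ℝ) (hQ0 : ∀ x, 0 ≤ Q x)
    (hQLs : MemLp Q (ENNReal.ofReal s) (volume.restrict (ball x0 ε0))) :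
    Tendsto (fun ε : ℝ =>
        Real.log (ε0 / ε) ^ (-p) *
          ∫ x in {x | dist x x0 ∈ Set.Ioo ε ε0}, Q x * dist x x0 ^ (-p))
      (𝓝[>] (0 : ℝ)) (𝓝 0) := by
  have : NeZero n := ⟨by omega⟩
  have hn₂ : (2 : ℝ) ≤ n := by exact_mod_cast hn
  have hnp : 0 < (n : ℝ) - p := by linarith
  have hs₁ : 1 < s := ((one_lt_div hnp).2 (by linarith)).trans_le hs
  set q := s.conjExponent
  have hsq : s.HolderConjugate q := .conjExponent hs₁
  have hq : 1 / q < p := by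
    rw [one_div, ← hsq.one_sub_inv]
    linarith [inv_pos.2 hsq.pos]
  have hpq : p * q ≤ Module.finrank ℝ (EuclideanSpace ℝ (Fin n)) := by
    rw [finrank_euclideanSpace_fin]
    have hsn : (n : ℝ) ≤ s * (n - p) := (div_le_iff₀ hnp).1 hs
    refine le_of_mul_le_mul_left ?_ hsq.sub_one_pos
    linear_combination hsn + p * hsq.sub_one_mul_conj
  apply tendsto_rpow_neg_mul_of_le_rpow (tendsto_log_div_nhdsGT_zero_atTop hε0) hq
  · filter_upwards [Ioo_mem_nhdsGT hε0] with ε hε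
    exact setIntegral_annulus_mul_dist_rpow_neg_le volume hsq (by linarith) hpq hε.1 hε.2.le hQ0
      hQLs
  · filter_upwards with ε
    exact setIntegral_nonneg (measurableSet_annulus x0 ε ε0)
      fun x _ => mul_nonneg (hQ0 x) (Real.rpow_nonneg dist_nonneg _)

/-- For `n ≥ 2`, `p ∈ [n−1, n)`, `x0 ∈ ℝⁿ`, `ε0 > 0`, `s ≥ n/(n−p)`,
and a nonnegative measurable `Q ∈ L^s(B(x0, ε0))`, one has
`(log(ε0/ε))^{−p} · ∫_{ε < |x−x0| < ε0} Q(x)·|x−x0|^{−p} dx → 0` as `ε → 0⁺`. -/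
theorem tendsto_annulus_integral_div_log_pow (n : ℕ) (hn : 2 ≤ n) (p : ℝ)
    (hp₁ : (n : ℝ) - 1 ≤ p) (hp₂ : p < (n : ℝ))
    (x0 : EuclideanSpace ℝ (Fin n)) (ε0 : ℝ) (hε0 : 0 < ε0)
    (s : ℝ) (hs : (n : ℝ) / ((n : ℝ) - p) ≤ s)
    (Q : EuclideanSpace ℝ (Fin n) → ℝ) (hQ0 : ∀ x, 0 ≤ Q x) (hQm : Measurable Q)
    (hQLs : MemLp Q (ENNReal.ofReal s) (volume.restrict (ball x0 ε0))) :
    Tendsto (fun ε : ℝ =>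
        Real.log (ε0 / ε) ^ (-p) *
          ∫ x in {x | dist x x0 ∈ Set.Ioo ε ε0}, Q x * dist x x0 ^ (-p))
      (𝓝[>] (0 : ℝ)) (𝓝 0) :=
  tendsto_annulus_integral_div_log_pow_general n hn p hp₁ hp₂ x0 ε0 hε0 s hs Q hQ0 hQLs
end
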